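/- If an itemset X satisfies TWU(X,h)/pto(h) < θ for every time period h with pto(h) > 0, then every superset Y ⊇ X also satisfies TWU(Y,h)/pto(h) < θ for all such h; in particular neither X nor any superset has period relative utility reaching θ in any period. -/
import Mathlib


open Finset

section
variable {τ ι : Type*} [DecidableEq ι]
variable (D : Finset τ) (items : τ → Finset ι) (q : τ → ι → ℕ) (p : ι → ℤ) (pt : τ → ℕ)

/-- The utility of itemset `X` in transaction `T`: `u(X,T) = Σ_{i∈X} p(i)·q(i,T)`. -/
def setU (X : Finset ι) (T : τ) : ℤ := ∑ i ∈ X, p i * q T i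

/-- The period utility `u(X,h) = Σ_{T∈D, pt(T)=h, X⊆T} u(X,T)`. -/
def periodU (X : Finset ι) (h : ℕ) : ℤ :=
  ∑ T ∈ D.filter (fun T => pt T = h ∧ X ⊆ items T), setU q p X T

/-- The positive transaction utility `PTU(T) = Σ_{i∈T, p(i)>0} u(i,T)`. -/
def PTU (T : τ) : ℤ := ∑ i ∈ (items T).filter (fun i => 0 < p i), p i * q T i

/-- The transaction-weighted utilization `TWU(X,h) = Σ_{T∈D, X⊆T, pt(T)=h} PTU(T)`. -/
def TWU (X : Finset ι) (h : ℕ) : ℤ :=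
  ∑ T ∈ D.filter (fun T => pt T = h ∧ X ⊆ items T), PTU items q p T

/-- The transaction utility `TU(T) = Σ_{i∈T} p(i)·q(i,T)`. -/
def TU (T : τ) : ℤ := ∑ i ∈ items T, p i * q T i

/-- The total utility of time period `h`: `pto(h) = Σ_{T∈D, pt(T)=h} TU(T)`. -/
def pto (h : ℕ) : ℤ := ∑ T ∈ D.filter (fun T => pt T = h), TU items q p T

/-- if for every period `h` with `pto(h) > 0` we have `TWU(X,h)/pto(h) < θ`,
then every superset `Y ⊇ X` also satisfies `TWU(Y,h)/pto(h) < θ` for all such `h`, and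
in particular the period relative utility `u(Y,h)/pto(h)` of `X` and of every superset
never reaches `θ`. -/
theorem TWU_pruning (hq : ∀ T i, i ∈ items T → 1 ≤ q T i)
    (X : Finset ι) (θ : ℚ) (hθ : 0 < θ)
    (hX : ∀ h : ℕ, 0 < pto D items q p pt h →
      (TWU D items q p pt X h : ℚ) / (pto D items q p pt h : ℚ) < θ) :
    ∀ Y : Finset ι, X ⊆ Y → ∀ h : ℕ, 0 < pto D items q p pt h →
      (TWU D items q p pt Y h : ℚ) / (pto D items q p pt h : ℚ) < θ ∧
      (periodU D items q p pt Y h : ℚ) / (pto D items q p pt h : ℚ) < θ := by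
  intro Y hXY h hpos
  have hPTU : ∀ T : τ, 0 ≤ PTU items q p T := by
    intro T
    apply Finset.sum_nonneg
    intro i hi
    have hp : 0 < p i := (Finset.mem_filter.mp hi).2
    positivity
  have hsub : D.filter (fun T => pt T = h ∧ Y ⊆ items T) ⊆
      D.filter (fun T => pt T = h ∧ X ⊆ items T) := by
    intro T hT
    simp only [Finset.mem_filter] at hT ⊢
    exact ⟨hT.1, hT.2.1, hXY.trans hT.2.2⟩
  have hTWU : TWU D items q p pt Y h ≤ TWU D items q p pt X h :=
    Finset.sum_le_sum_of_subset_of_nonneg hsub (fun T _ _ => hPTU T)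
  have hU : periodU D items q p pt Y h ≤ TWU D items q p pt Y h := by
    apply Finset.sum_le_sum
    intro T hT
    have hYT : Y ⊆ items T := (Finset.mem_filter.mp hT).2.2
    unfold setU PTU
    have : Y ⊆ (items T).filter (fun i => 0 < p i) ∪ Y.filter (fun i => ¬ 0 < p i) := by
      intro i hi
      rcases lt_or_ge 0 (p i) with hp | hp
      · exact Finset.mem_union_left _ (Finset.mem_filter.mpr ⟨hYT hi, hp⟩)
      · exact Finset.mem_union_right _ (Finset.mem_filter.mpr ⟨hi, not_lt.mpr hp⟩)
    calc ∑ i ∈ Y, p i * q T i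
        ≤ ∑ i ∈ (items T).filter (fun i => 0 < p i) ∪ Y.filter (fun i => ¬ 0 < p i),
            p i * q T i := by
          apply Finset.sum_le_sum_of_subset_of_nonneg this
          intro i hi hiY
          have hp : 0 < p i := by
            rcases Finset.mem_union.mp hi with h' | h'
            · exact (Finset.mem_filter.mp h').2
            · exact absurd (Finset.mem_filter.mp h').1 hiY
          positivity
      _ ≤ ∑ i ∈ (items T).filter (fun i => 0 < p i), p i * q T i := by
          have hdisj : Disjoint ((items T).filter (fun i => 0 < p i))
              (Y.filter (fun i => ¬ 0 < p i)) := by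
            rw [Finset.disjoint_left]
            intro i h1 h2
            exact (Finset.mem_filter.mp h2).2 (Finset.mem_filter.mp h1).2
          rw [Finset.sum_union hdisj]
          apply add_le_of_nonpos_right
          apply Finset.sum_nonpos
          intro i hi
          have hp : p i ≤ 0 := not_lt.mp (Finset.mem_filter.mp hi).2
          exact mul_nonpos_of_nonpos_of_nonneg hp (by positivity)
  have hX' := hX h hpos
  have hptoQ : (0 : ℚ) < (pto D items q p pt h : ℚ) := by exact_mod_cast hpos
  constructor
  · calc (TWU D items q p pt Y h : ℚ) / (pto D items q p pt h : ℚ)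
        ≤ (TWU D items q p pt X h : ℚ) / (pto D items q p pt h : ℚ) := by
          have : (TWU D items q p pt Y h : ℚ) ≤ (TWU D items q p pt X h : ℚ) := by
            exact_mod_cast hTWU
          exact (div_le_div_iff_of_pos_right hptoQ).mpr this
      _ < θ := hX'
  · calc (periodU D items q p pt Y h : ℚ) / (pto D items q p pt h : ℚ)
        ≤ (TWU D items q p pt X h : ℚ) / (pto D items q p pt h : ℚ) := by
          have : (periodU D items q p pt Y h : ℚ) ≤ (TWU D items q p pt X h : ℚ) := by
            exact_mod_cast hU.trans hTWU
          exact (div_le_div_iff_of_pos_right hptoQ).mpr this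
      _ < θ := hX'

end
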